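/- arXiv:1608.05994 — 2 statements merged into one kernel-verified Lean document; each statement's English description precedes it below -/
import Mathlib

section
/- Let H_n(t) = \int_0^π exp(t cos θ) sin^{n-2} θ dθ. If t_n is a sequence of nonnegative reals with t_n = o(n^{1/2}), then H_n(t_n)/H_n(0) → 1 as n → ∞. -/
/-!
By the symmetry `θ ↦ π - θ`, `H_n(t) = ∫ cosh (t cos θ) sin^m θ` with `m = n - 2`, so
`H_n(t) ≥ H_n(0)`. For the upper bound use `cosh x ≤ exp (x² / 2)` and split
`sin^m = (1 - cos²)^k sin^j` with `k ≈ m / 4`: the elementary inequality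
`exp (a x) (1 - x)^k ≤ (1 - x)^k + 2a / k` on `[0, 1]` gives
`H_n(t) ≤ H_n(0) + (t² / k) ∫ sin^j`, and Wallis' identity `I_j I_{j+1} = 2π / (j + 1)` shows
`∫ sin^j ≤ 2 H_n(0)` since `j ≥ m / 2`. Hence `1 ≤ H_n(t_n) / H_n(0) ≤ 1 + O(t_n² / n)`.
-/

open Filter Real intervalIntegral Asymptotics

lemma exp_mul_mul_one_sub_pow_le {a x : ℝ} {k : ℕ} (ha : 0 ≤ a) (hak : 2 * a ≤ k)
    (hx₀ : 0 ≤ x) (hx₁ : x ≤ 1) :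
    exp (a * x) * (1 - x) ^ k ≤ (1 - x) ^ k + 2 * a / k := by
  obtain rfl | hk := k.eq_zero_or_pos
  · obtain rfl : a = 0 := by push_cast at hak; linarith
    simp
  have hpow : (1 - x) ^ k ≤ exp (-(k * x)) :=
    calc (1 - x) ^ k ≤ exp (-x) ^ k := by gcongr; exact one_sub_le_exp_neg x
      _ = exp (-(k * x)) := by rw [← exp_nat_mul]; ring_nf
  have hexp : exp (a * x) - 1 ≤ a * x * exp (a * x) := by
    have := mul_le_mul_of_nonneg_right (one_sub_le_exp_neg (a * x)) (exp_pos (a * x)).le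
    rw [← exp_add, neg_add_cancel, exp_zero] at this
    linarith
  have hbump : k * x / 2 * exp (-(k * x / 2)) ≤ 1 :=
    (mul_exp_neg_le_exp_neg_one _).trans (exp_le_one_iff.2 (by norm_num))
  suffices (exp (a * x) - 1) * (1 - x) ^ k ≤ 2 * a / k by linarith
  calc (exp (a * x) - 1) * (1 - x) ^ k ≤ a * x * exp (a * x) * exp (-(k * x)) := by gcongr
    _ = a * x * exp (a * x - k * x) := by rw [mul_assoc, ← exp_add, sub_eq_add_neg]
    _ ≤ a * x * exp (-(k * x / 2)) := by gcongr; nlinarith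
    _ = 2 * a / k * (k * x / 2 * exp (-(k * x / 2))) := by field_simp
    _ ≤ 2 * a / k := mul_le_of_le_one_right (by positivity) hbump

lemma integral_exp_mul_cos_mul_sin_pow_eq_integral_cosh (t : ℝ) (m : ℕ) :
    ∫ θ in 0..π, exp (t * cos θ) * sin θ ^ m = ∫ θ in 0..π, cosh (t * cos θ) * sin θ ^ m := by
  have hreflect : ∫ θ in 0..π, exp (-(t * cos θ)) * sin θ ^ m =
      ∫ θ in 0..π, exp (t * cos θ) * sin θ ^ m := by
    simpa only [cos_pi_sub, sin_pi_sub, mul_neg, neg_neg, sub_zero, sub_self] using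
      (integral_comp_sub_left (fun θ => exp (-(t * cos θ)) * sin θ ^ m) π (a := 0) (b := π)).symm
  simp only [cosh_eq, div_mul_eq_mul_div, add_mul]
  rw [integral_div, integral_add (Continuous.intervalIntegrable (by fun_prop) _ _)
    (Continuous.intervalIntegrable (by fun_prop) _ _), hreflect]
  ring

lemma integral_sin_pow_le_integral_exp_mul_cos_mul_sin_pow (t : ℝ) (m : ℕ) :
    ∫ θ in 0..π, sin θ ^ m ≤ ∫ θ in 0..π, exp (t * cos θ) * sin θ ^ m := by
  rw [integral_exp_mul_cos_mul_sin_pow_eq_integral_cosh]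
  refine integral_mono_on pi_pos.le (Continuous.intervalIntegrable (by fun_prop) _ _)
    (Continuous.intervalIntegrable (by fun_prop) _ _) fun θ hθ => ?_
  exact le_mul_of_one_le_left (pow_nonneg (sin_nonneg_of_mem_Icc hθ) m) (one_le_cosh _)

lemma integral_cosh_mul_cos_mul_sin_pow_add_le (t : ℝ) (j k : ℕ) (ht : t ^ 2 ≤ k) :
    ∫ θ in 0..π, cosh (t * cos θ) * sin θ ^ (j + 2 * k) ≤
      (∫ θ in 0..π, sin θ ^ (j + 2 * k)) + t ^ 2 / k * ∫ θ in 0..π, sin θ ^ j := by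
  rw [← integral_const_mul, ← integral_add (Continuous.intervalIntegrable (by fun_prop) _ _)
    (Continuous.intervalIntegrable (by fun_prop) _ _)]
  refine integral_mono_on pi_pos.le (Continuous.intervalIntegrable (by fun_prop) _ _)
    (Continuous.intervalIntegrable (by fun_prop) _ _) fun θ hθ => ?_
  have hsin : sin θ ^ (j + 2 * k) = (1 - cos θ ^ 2) ^ k * sin θ ^ j := by
    rw [pow_add, pow_mul, sin_sq, mul_comm]
  have hcosh : cosh (t * cos θ) ≤ exp (t ^ 2 / 2 * cos θ ^ 2) :=
    (cosh_le_exp_half_sq _).trans_eq (by ring_nf)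
  have hsj : 0 ≤ sin θ ^ j := pow_nonneg (sin_nonneg_of_mem_Icc hθ) j
  have hcos : 0 ≤ (1 - cos θ ^ 2) ^ k := pow_nonneg (by linarith [cos_sq_le_one θ]) k
  have key := exp_mul_mul_one_sub_pow_le (a := t ^ 2 / 2) (k := k) (by positivity) (by linarith)
    (sq_nonneg (cos θ)) (cos_sq_le_one θ)
  rw [hsin]
  calc cosh (t * cos θ) * ((1 - cos θ ^ 2) ^ k * sin θ ^ j)
      ≤ exp (t ^ 2 / 2 * cos θ ^ 2) * (1 - cos θ ^ 2) ^ k * sin θ ^ j := by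
        rw [← mul_assoc]; gcongr
    _ ≤ ((1 - cos θ ^ 2) ^ k + 2 * (t ^ 2 / 2) / k) * sin θ ^ j := by gcongr
    _ = _ := by ring

lemma integral_sin_pow_mul_integral_sin_pow_succ (n : ℕ) :
    (∫ x in 0..π, sin x ^ n) * (∫ x in 0..π, sin x ^ (n + 1)) = 2 * π / (n + 1) := by
  induction n with
  | zero => norm_num [mul_comm]
  | succ n ih =>
    have hred : ∫ x in 0..π, sin x ^ (n + 2) = (n + 1) / (n + 2) * ∫ x in 0..π, sin x ^ n := by
      simp [integral_sin_pow]
    rw [mul_comm, hred, mul_assoc, ih]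
    push_cast
    field_simp
    ring

lemma sq_integral_sin_pow_succ_le (n : ℕ) :
    (∫ x in 0..π, sin x ^ (n + 1)) ^ 2 ≤ 2 * π / (n + 1) := by
  rw [← integral_sin_pow_mul_integral_sin_pow_succ, sq]
  exact mul_le_mul_of_nonneg_right (integral_sin_pow_succ_le n) (integral_sin_pow_pos _).le

lemma two_mul_pi_div_le_sq_integral_sin_pow (n : ℕ) :
    2 * π / (n + 1) ≤ (∫ x in 0..π, sin x ^ n) ^ 2 := by
  rw [← integral_sin_pow_mul_integral_sin_pow_succ, sq]
  exact mul_le_mul_of_nonneg_left (integral_sin_pow_succ_le n) (integral_sin_pow_pos _).le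

lemma integral_sin_pow_succ_le_two_mul {p q : ℕ} (h : q + 1 ≤ 4 * (p + 1)) :
    ∫ x in 0..π, sin x ^ (p + 1) ≤ 2 * ∫ x in 0..π, sin x ^ q := by
  have h' : (q : ℝ) + 1 ≤ 4 * (p + 1) := by exact_mod_cast h
  refine (pow_le_pow_iff_left₀ (integral_sin_pow_pos _).le
    (mul_nonneg zero_le_two (integral_sin_pow_pos _).le) two_ne_zero).1 ?_
  calc (∫ x in 0..π, sin x ^ (p + 1)) ^ 2 ≤ 2 * π / (p + 1) := sq_integral_sin_pow_succ_le p
    _ ≤ 4 * (2 * π / (q + 1)) := by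
        rw [mul_div_assoc', div_le_div_iff₀ (by positivity) (by positivity)]
        nlinarith [pi_pos]
    _ ≤ 4 * (∫ x in 0..π, sin x ^ q) ^ 2 := by gcongr; exact two_mul_pi_div_le_sq_integral_sin_pow q
    _ = (2 * ∫ x in 0..π, sin x ^ q) ^ 2 := by ring

lemma integral_exp_mul_cos_mul_sin_pow_le {m : ℕ} {t : ℝ} (hm : 4 ≤ m) (ht : 8 * t ^ 2 ≤ m) :
    ∫ θ in 0..π, exp (t * cos θ) * sin θ ^ m ≤ (1 + 16 * t ^ 2 / m) * ∫ θ in 0..π, sin θ ^ m := by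
  obtain ⟨p, k, rfl, h8k, h4p⟩ : ∃ p k : ℕ, m = p + 1 + 2 * k ∧ m ≤ 8 * k ∧ m + 1 ≤ 4 * (p + 1) :=
    ⟨m - 2 * (m / 4) - 1, m / 4, by omega, by omega, by omega⟩
  set I := ∫ θ in 0..π, sin θ ^ (p + 1 + 2 * k)
  have hk : (0 : ℝ) < k := by exact_mod_cast (show 0 < k by omega)
  have h8k' : ((p + 1 + 2 * k : ℕ) : ℝ) ≤ 8 * k := by exact_mod_cast h8k
  rw [integral_exp_mul_cos_mul_sin_pow_eq_integral_cosh]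
  calc _ ≤ I + t ^ 2 / k * ∫ θ in 0..π, sin θ ^ (p + 1) :=
        integral_cosh_mul_cos_mul_sin_pow_add_le t (p + 1) k (by linarith)
    _ ≤ I + t ^ 2 / k * (2 * I) := by gcongr; exact integral_sin_pow_succ_le_two_mul h4p
    _ = (1 + 2 * t ^ 2 / k) * I := by ring
    _ ≤ (1 + 16 * t ^ 2 / (p + 1 + 2 * k : ℕ)) * I := by
        gcongr ?_ * I
        · exact (integral_sin_pow_pos _).le
        rw [add_le_add_iff_left, div_le_div_iff₀ hk (by positivity)]
        nlinarith [sq_nonneg t]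

lemma tendsto_sq_div_of_isLittleO_sqrt {f : ℕ → ℝ} (hf : f =o[atTop] fun n => √(n : ℝ)) :
    Tendsto (fun n => f n ^ 2 / n) atTop (nhds 0) := by
  refine IsLittleO.tendsto_div_nhds_zero ?_
  simpa [sq_sqrt] using hf.pow two_pos

theorem bessel_ratio_tendsto_one_general
    (H : ℕ → ℝ → ℝ)
    (hH : ∀ n t, H n t = ∫ θ in (0:ℝ)..Real.pi, Real.exp (t * Real.cos θ) * Real.sin θ ^ (n - 2))
    (t : ℕ → ℝ)
    (hto : t =o[atTop] (fun n : ℕ => Real.sqrt n)) :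
    Tendsto (fun n => H n (t n) / H n 0) atTop (nhds 1) := by
  have hsq := tendsto_sq_div_of_isLittleO_sqrt hto
  have hbounds : ∀ᶠ n : ℕ in atTop,
      1 ≤ H n (t n) / H n 0 ∧ H n (t n) / H n 0 ≤ 1 + 32 * (t n ^ 2 / n) := by
    filter_upwards [eventually_ge_atTop 6,
      hsq.eventually (eventually_le_nhds (by norm_num : (0 : ℝ) < 1 / 16))] with n hn htn
    have hH0 : H n 0 = ∫ θ in 0..π, sin θ ^ (n - 2) := by simp [hH]
    have hI : 0 < H n 0 := hH0 ▸ integral_sin_pow_pos _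
    have hnm : (n : ℝ) ≤ 2 * (n - 2 : ℕ) := by norm_cast; omega
    have hn0 : (0 : ℝ) < n := by norm_cast; omega
    rw [div_le_iff₀ hn0] at htn
    rw [le_div_iff₀ hI, one_mul, div_le_iff₀ hI, hH0, hH]
    refine ⟨integral_sin_pow_le_integral_exp_mul_cos_mul_sin_pow _ _,
      (integral_exp_mul_cos_mul_sin_pow_le (by omega) (by linarith)).trans ?_⟩
    gcongr ?_ * _
    · exact (integral_sin_pow_pos _).le
    rw [add_le_add_iff_left, mul_div_assoc', div_le_div_iff₀ (by linarith) hn0]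
    nlinarith [sq_nonneg (t n)]
  have hup : Tendsto (fun n : ℕ => 1 + 32 * (t n ^ 2 / n)) atTop (nhds 1) := by
    simpa using (hsq.const_mul 32).const_add 1
  exact tendsto_of_tendsto_of_tendsto_of_le_of_le' tendsto_const_nhds hup
    (hbounds.mono fun _ h => h.1) (hbounds.mono fun _ h => h.2)

/-- With `H_n(t) = ∫_0^π e^{t cos θ} sin^{n-2} θ dθ`, if `t_n ≥ 0` and
`t_n = o(√n)`, then `H_n(t_n)/H_n(0) → 1`. -/
theorem bessel_ratio_tendsto_one
    (H : ℕ → ℝ → ℝ)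
    (hH : ∀ n t, H n t = ∫ θ in (0:ℝ)..Real.pi, Real.exp (t * Real.cos θ) * Real.sin θ ^ (n - 2))
    (t : ℕ → ℝ) (ht : ∀ n, 0 ≤ t n)
    (hto : t =o[atTop] (fun n : ℕ => Real.sqrt n)) :
    Tendsto (fun n => H n (t n) / H n 0) atTop (nhds 1) :=
  bessel_ratio_tendsto_one_general H hH t hto
end

section
/- In the Gaussian location model X ~ N(m, I_n), for any δ > 0, the supremum over all orthogonally invariant tests T (measurable T: R^n → [0,1] with T(Px)=T(x) for all orthogonal P) and all mean vectors m with ||m|| ≤ δ of |E_m[T(X)] - E_0[T(X)]| converges to 0 as n → ∞. -/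
open MeasureTheory

/-- The standard Gaussian measure on `ℝ^n` with mean vector `m` and identity covariance. -/
noncomputable def gaussianEuclidean (n : ℕ) (m : EuclideanSpace ℝ (Fin n)) :
    Measure (EuclideanSpace ℝ (Fin n)) :=
  volume.withDensity fun x =>
    ENNReal.ofReal ((2 * Real.pi) ^ (-(n : ℝ) / 2) * Real.exp (-‖x - m‖ ^ 2 / 2))

/-!
Orthogonal invariance makes `E_m[T]` a function of `‖m‖` alone, so `E_m[T] = E_{r eᵢ}[T]` for
`r = ‖m‖` and each coordinate vector `eᵢ`. Averaging the change-of-measure identities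
`E_{r eᵢ}[T] - E_0[T] = E_0[(Lᵢ - 1) T]` over `i` gives `E_m[T] - E_0[T] = E_0[(L̄ - 1) T]`,
where `L̄` is the mean of the likelihood ratios `Lᵢ`. Since `E_0[L_u L_w] = exp ⟪u, w⟫`, the
variance of `L̄` is `(exp r² - 1) / n`, and Cauchy–Schwarz (as `|f T| ≤ f² / (2ε) + ε / 2`) bounds
the difference by its square root.
-/

open Real
open scoped RealInnerProductSpace

lemma abs_integral_mul_le_of_integral_sq_le {α : Type*} [MeasurableSpace α] {μ : Measure α}
    [IsProbabilityMeasure μ] {f T : α → ℝ} {ε : ℝ} (hε : 0 < ε)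
    (hf : Integrable (fun x ↦ f x ^ 2) μ) (hT : ∀ x, |T x| ≤ 1) (hfε : ∫ x, f x ^ 2 ∂μ ≤ ε ^ 2) :
    |∫ x, f x * T x ∂μ| ≤ ε := by
  have amgm : ∀ x, |f x * T x| ≤ f x ^ 2 / (2 * ε) + ε / 2 := fun x ↦ calc
    |f x * T x| ≤ |f x| := by rw [abs_mul]; exact mul_le_of_le_one_right (abs_nonneg _) (hT x)
    _ ≤ f x ^ 2 / (2 * ε) + ε / 2 := by
      rw [div_add_div _ _ (by positivity) two_ne_zero, le_div_iff₀ (by positivity)]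
      nlinarith [sq_nonneg (|f x| - ε), sq_abs (f x)]
  have hbound : Integrable (fun x ↦ f x ^ 2 / (2 * ε) + ε / 2) μ :=
    (hf.div_const _).add (integrable_const _)
  calc |∫ x, f x * T x ∂μ| ≤ ∫ x, (f x ^ 2 / (2 * ε) + ε / 2) ∂μ := by
        simpa only [norm_eq_abs] using norm_integral_le_of_norm_le hbound
          (.of_forall fun x ↦ (norm_eq_abs _).trans_le (amgm x))
    _ = (∫ x, f x ^ 2 ∂μ) / (2 * ε) + ε / 2 := by
        rw [integral_add (hf.div_const _) (integrable_const _), integral_div]; simp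
    _ ≤ ε ^ 2 / (2 * ε) + ε / 2 := by gcongr
    _ = ε := by field_simp; ring

noncomputable def gaussianDensity (n : ℕ) (m x : EuclideanSpace ℝ (Fin n)) : ℝ :=
  (2 * π) ^ (-(n : ℝ) / 2) * exp (-‖x - m‖ ^ 2 / 2)

noncomputable def likelihoodRatio {n : ℕ} (w x : EuclideanSpace ℝ (Fin n)) : ℝ :=
  exp (⟪w, x⟫ - ‖w‖ ^ 2 / 2)

section Gaussian

variable {n : ℕ} {ι : Type*} [Fintype ι]

local notation "ℝⁿ" => EuclideanSpace ℝ (Fin n)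
local notation "μ₀" => gaussianEuclidean n 0

lemma gaussianEuclidean_eq_withDensity (m : ℝⁿ) :
    gaussianEuclidean n m = volume.withDensity fun x ↦ ENNReal.ofReal (gaussianDensity n m x) :=
  rfl

lemma gaussianDensity_nonneg (m x : ℝⁿ) : 0 ≤ gaussianDensity n m x := by
  unfold gaussianDensity; positivity

@[fun_prop]
lemma measurable_gaussianDensity (m : ℝⁿ) : Measurable (gaussianDensity n m) := by
  unfold gaussianDensity; fun_prop

lemma integral_gaussianDensity_zero : ∫ x : ℝⁿ, gaussianDensity n 0 x = 1 := by
  simp_rw [gaussianDensity, sub_zero, integral_const_mul, neg_div, div_eq_inv_mul, ← neg_mul]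
  rw [GaussianFourier.integral_rexp_neg_mul_sq_norm (by norm_num), finrank_euclideanSpace_fin,
    div_inv_eq_mul, mul_comm π, ← rpow_add (by positivity)]
  ring_nf
  exact rpow_zero _

lemma integral_gaussianDensity (m : ℝⁿ) : ∫ x, gaussianDensity n m x = 1 := by
  rw [← integral_gaussianDensity_zero (n := n)]
  simpa [gaussianDensity] using integral_sub_right_eq_self (μ := volume) (gaussianDensity n 0) m

lemma integrable_gaussianDensity (m : ℝⁿ) : Integrable (gaussianDensity n m) := by
  refine Integrable.of_integral_ne_zero ?_
  simp [integral_gaussianDensity]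

instance isProbabilityMeasure_gaussianEuclidean (m : ℝⁿ) :
    IsProbabilityMeasure (gaussianEuclidean n m) := by
  constructor
  rw [gaussianEuclidean_eq_withDensity, withDensity_apply _ MeasurableSet.univ,
    Measure.restrict_univ,     ← ofReal_integral_eq_lintegral_ofReal (integrable_gaussianDensity m)
      (.of_forall (gaussianDensity_nonneg m)), integral_gaussianDensity, ENNReal.ofReal_one]

lemma integral_gaussianEuclidean (m : ℝⁿ) (g : ℝⁿ → ℝ) :
    ∫ x, g x ∂gaussianEuclidean n m = ∫ x, gaussianDensity n m x * g x := by
  rw [gaussianEuclidean_eq_withDensity, integral_withDensity_eq_integral_toReal_smul (by fun_prop)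
    (.of_forall fun _ ↦ ENNReal.ofReal_lt_top)]
  simp [ENNReal.toReal_ofReal (gaussianDensity_nonneg m _)]

lemma integrable_gaussianEuclidean_iff (m : ℝⁿ) (g : ℝⁿ → ℝ) :
    Integrable g (gaussianEuclidean n m) ↔ Integrable fun x ↦ gaussianDensity n m x * g x := by
  rw [gaussianEuclidean_eq_withDensity, integrable_withDensity_iff_integrable_smul' (by fun_prop)
    (.of_forall fun _ ↦ ENNReal.ofReal_lt_top)]
  simp [ENNReal.toReal_ofReal (gaussianDensity_nonneg m _)]

lemma gaussianDensity_eq_mul_likelihoodRatio (m x : ℝⁿ) :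
    gaussianDensity n m x = gaussianDensity n 0 x * likelihoodRatio m x := by
  rw [gaussianDensity, gaussianDensity, likelihoodRatio, mul_assoc, ← exp_add, sub_zero,
    norm_sub_sq_real, real_inner_comm]
  ring_nf

lemma integral_gaussianEuclidean_eq_integral_likelihoodRatio_mul (m : ℝⁿ) (g : ℝⁿ → ℝ) :
    ∫ x, g x ∂gaussianEuclidean n m = ∫ x, likelihoodRatio m x * g x ∂μ₀ := by
  simp_rw [integral_gaussianEuclidean, gaussianDensity_eq_mul_likelihoodRatio m, mul_assoc]

lemma integrable_gaussianEuclidean_iff_integrable_likelihoodRatio_mul (m : ℝⁿ) (g : ℝⁿ → ℝ) :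
    Integrable g (gaussianEuclidean n m) ↔ Integrable (fun x ↦ likelihoodRatio m x * g x) μ₀ := by
  simp_rw [integrable_gaussianEuclidean_iff, gaussianDensity_eq_mul_likelihoodRatio m, mul_assoc]

lemma integrable_likelihoodRatio (w : ℝⁿ) : Integrable (likelihoodRatio w) μ₀ := by
  simpa using (integrable_gaussianEuclidean_iff_integrable_likelihoodRatio_mul w 1).1
    (integrable_const 1)

lemma integral_likelihoodRatio (w : ℝⁿ) : ∫ x, likelihoodRatio w x ∂μ₀ = 1 := by
  simpa using (integral_gaussianEuclidean_eq_integral_likelihoodRatio_mul w 1).symm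

lemma likelihoodRatio_mul_likelihoodRatio (u w x : ℝⁿ) :
    likelihoodRatio u x * likelihoodRatio w x = exp ⟪u, w⟫ * likelihoodRatio (u + w) x := by
  simp only [likelihoodRatio, ← exp_add, inner_add_left, norm_add_sq_real]
  ring_nf

lemma likelihoodRatio_sub_one_mul_likelihoodRatio_sub_one (u w x : ℝⁿ) :
    (likelihoodRatio u x - 1) * (likelihoodRatio w x - 1) =
      exp ⟪u, w⟫ * likelihoodRatio (u + w) x - likelihoodRatio u x - likelihoodRatio w x + 1 := by
  rw [← likelihoodRatio_mul_likelihoodRatio]; ring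

lemma integrable_likelihoodRatio_sub_one_mul_likelihoodRatio_sub_one (u w : ℝⁿ) :
    Integrable (fun x ↦ (likelihoodRatio u x - 1) * (likelihoodRatio w x - 1)) μ₀ := by
  simp_rw [likelihoodRatio_sub_one_mul_likelihoodRatio_sub_one]
  exact ((((integrable_likelihoodRatio _).const_mul _).sub (integrable_likelihoodRatio u)).sub
    (integrable_likelihoodRatio w)).add (integrable_const 1)

lemma integral_likelihoodRatio_sub_one_mul_likelihoodRatio_sub_one (u w : ℝⁿ) :
    ∫ x, (likelihoodRatio u x - 1) * (likelihoodRatio w x - 1) ∂μ₀ = exp ⟪u, w⟫ - 1 := by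
  simp_rw [likelihoodRatio_sub_one_mul_likelihoodRatio_sub_one]
  have hu : Integrable (fun x ↦ likelihoodRatio u x) μ₀ := integrable_likelihoodRatio u
  have hw : Integrable (fun x ↦ likelihoodRatio w x) μ₀ := integrable_likelihoodRatio w
  have huw := (integrable_likelihoodRatio (u + w)).const_mul (exp ⟪u, w⟫)
  rw [integral_add (by exact (huw.sub hu).sub hw) (integrable_const 1),
    integral_sub (by exact huw.sub hu) hw, integral_sub huw hu, integral_const_mul]
  simp [integral_likelihoodRatio]

lemma gaussianDensity_map (Q : ℝⁿ ≃ₗᵢ[ℝ] ℝⁿ) (m x : ℝⁿ) :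
    gaussianDensity n (Q m) (Q x) = gaussianDensity n m x := by
  rw [gaussianDensity, gaussianDensity, ← map_sub, Q.norm_map]

lemma integral_comp_gaussianEuclidean (Q : ℝⁿ ≃ₗᵢ[ℝ] ℝⁿ) (m : ℝⁿ) (g : ℝⁿ → ℝ) :
    ∫ x, g (Q x) ∂gaussianEuclidean n m = ∫ x, g x ∂gaussianEuclidean n (Q m) := by
  rw [integral_gaussianEuclidean, integral_gaussianEuclidean,
    ← Q.measurePreserving.integral_comp Q.toHomeomorph.measurableEmbedding (fun x ↦ _ * g x)]
  simp_rw [gaussianDensity_map]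

lemma integral_gaussianEuclidean_eq_of_norm_eq {T : ℝⁿ → ℝ}
    (hT : ∀ (Q : ℝⁿ ≃ₗᵢ[ℝ] ℝⁿ) x, T (Q x) = T x) {m m' : ℝⁿ} (h : ‖m‖ = ‖m'‖) :
    ∫ x, T x ∂gaussianEuclidean n m = ∫ x, T x ∂gaussianEuclidean n m' := by
  set Q := Submodule.reflection (ℝ ∙ (m - m'))ᗮ
  rw [← Submodule.reflection_sub h, ← integral_comp_gaussianEuclidean Q]
  simp_rw [hT]

noncomputable def averageLikelihoodRatio (u : ι → ℝⁿ) (x : ℝⁿ) : ℝ :=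
  (Fintype.card ι : ℝ)⁻¹ * ∑ i, likelihoodRatio (u i) x

lemma averageLikelihoodRatio_sub_one [Nonempty ι] (u : ι → ℝⁿ) (x : ℝⁿ) :
    averageLikelihoodRatio u x - 1 =
      (Fintype.card ι : ℝ)⁻¹ * ∑ i, (likelihoodRatio (u i) x - 1) := by
  have : (Fintype.card ι : ℝ) ≠ 0 := Nat.cast_ne_zero.2 Fintype.card_ne_zero
  rw [averageLikelihoodRatio, Finset.sum_sub_distrib]
  simp [mul_sub, this]

lemma sq_averageLikelihoodRatio_sub_one [Nonempty ι] (u : ι → ℝⁿ) (x : ℝⁿ) :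
    (averageLikelihoodRatio u x - 1) ^ 2 = (Fintype.card ι : ℝ)⁻¹ ^ 2 *
      ∑ i, ∑ j, (likelihoodRatio (u i) x - 1) * (likelihoodRatio (u j) x - 1) := by
  rw [averageLikelihoodRatio_sub_one, mul_pow, sq (∑ i, _), Finset.sum_mul_sum]

lemma integrable_sq_averageLikelihoodRatio_sub_one [Nonempty ι] (u : ι → ℝⁿ) :
    Integrable (fun x ↦ (averageLikelihoodRatio u x - 1) ^ 2) μ₀ := by
  simp_rw [sq_averageLikelihoodRatio_sub_one]
  exact (integrable_finsetSum _ fun i _ ↦ integrable_finsetSum _ fun j _ ↦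
    integrable_likelihoodRatio_sub_one_mul_likelihoodRatio_sub_one (u i) (u j)).const_mul _

lemma integral_sq_averageLikelihoodRatio_sub_one [Nonempty ι] {u : ι → ℝⁿ} {r : ℝ}
    (horth : Pairwise fun i j ↦ ⟪u i, u j⟫ = 0) (hnorm : ∀ i, ‖u i‖ = r) :
    ∫ x, (averageLikelihoodRatio u x - 1) ^ 2 ∂μ₀ = (exp (r ^ 2) - 1) / Fintype.card ι := by
  simp_rw [sq_averageLikelihoodRatio_sub_one]
  rw [integral_const_mul, integral_finsetSum _ fun i _ ↦ integrable_finsetSum _ fun j _ ↦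
    integrable_likelihoodRatio_sub_one_mul_likelihoodRatio_sub_one (u i) (u j)]
  have hrow : ∀ i, ∫ x, ∑ j, (likelihoodRatio (u i) x - 1) * (likelihoodRatio (u j) x - 1) ∂μ₀ =
      exp (r ^ 2) - 1 := by
    intro i
    rw [integral_finsetSum _ fun j _ ↦
      integrable_likelihoodRatio_sub_one_mul_likelihoodRatio_sub_one (u i) (u j)]
    simp_rw [integral_likelihoodRatio_sub_one_mul_likelihoodRatio_sub_one]
    rw [Finset.sum_eq_single i (fun j _ hji ↦ by simp [horth hji.symm]) (by simp),
      real_inner_self_eq_norm_sq, hnorm]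
  have : (Fintype.card ι : ℝ) ≠ 0 := Nat.cast_ne_zero.2 Fintype.card_ne_zero
  simp_rw [hrow, Finset.sum_const, Finset.card_univ, nsmul_eq_mul]
  field_simp

lemma integrable_likelihoodRatio_sub_one_mul {T : ℝⁿ → ℝ} {w : ℝⁿ}
    (hTw : Integrable T (gaussianEuclidean n w)) (hT₀ : Integrable T μ₀) :
    Integrable (fun x ↦ (likelihoodRatio w x - 1) * T x) μ₀ := by
  simp_rw [sub_mul, one_mul]
  exact ((integrable_gaussianEuclidean_iff_integrable_likelihoodRatio_mul w T).1 hTw).sub hT₀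

lemma integral_gaussianEuclidean_sub_integral_zero {T : ℝⁿ → ℝ} {w : ℝⁿ}
    (hTw : Integrable T (gaussianEuclidean n w)) (hT₀ : Integrable T μ₀) :
    ∫ x, T x ∂gaussianEuclidean n w - ∫ x, T x ∂μ₀ = ∫ x, (likelihoodRatio w x - 1) * T x ∂μ₀ := by
  rw [integral_gaussianEuclidean_eq_integral_likelihoodRatio_mul, ← integral_sub
    ((integrable_gaussianEuclidean_iff_integrable_likelihoodRatio_mul w T).1 hTw) hT₀]
  simp_rw [sub_mul, one_mul]

lemma integral_gaussianEuclidean_sub_integral_zero_eq_integral_averageLikelihoodRatio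
    [Nonempty ι] {T : ℝⁿ → ℝ} (hT : ∀ (Q : ℝⁿ ≃ₗᵢ[ℝ] ℝⁿ) x, T (Q x) = T x)
    (hTint : ∀ w, Integrable T (gaussianEuclidean n w)) {m : ℝⁿ} {u : ι → ℝⁿ}
    (hu : ∀ i, ‖u i‖ = ‖m‖) :
    ∫ x, T x ∂gaussianEuclidean n m - ∫ x, T x ∂μ₀ =
      ∫ x, (averageLikelihoodRatio u x - 1) * T x ∂μ₀ := by
  have hcard : (Fintype.card ι : ℝ) ≠ 0 := Nat.cast_ne_zero.2 Fintype.card_ne_zero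
  have hi : ∀ i, ∫ x, T x ∂gaussianEuclidean n m - ∫ x, T x ∂μ₀ =
      ∫ x, (likelihoodRatio (u i) x - 1) * T x ∂μ₀ := fun i ↦ by
    rw [integral_gaussianEuclidean_eq_of_norm_eq hT (hu i).symm,
      integral_gaussianEuclidean_sub_integral_zero (hTint _) (hTint 0)]
  calc _ = (Fintype.card ι : ℝ)⁻¹ * ∑ _ : ι,
        (∫ x, T x ∂gaussianEuclidean n m - ∫ x, T x ∂μ₀) := by
        rw [Finset.sum_const, Finset.card_univ, nsmul_eq_mul, inv_mul_cancel_left₀ hcard]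
    _ = (Fintype.card ι : ℝ)⁻¹ * ∑ i, ∫ x, (likelihoodRatio (u i) x - 1) * T x ∂μ₀ := by
        simp_rw [← hi]
    _ = _ := by
        rw [← integral_finsetSum _ fun i _ ↦
          integrable_likelihoodRatio_sub_one_mul (hTint _) (hTint 0), ← integral_const_mul]
        simp_rw [averageLikelihoodRatio_sub_one, mul_assoc, Finset.sum_mul]

end Gaussian

theorem orthogonally_invariant_tests_power_tendsto_level_general
    (δ : ℝ) :
    ∀ ε > 0, ∃ N : ℕ, ∀ n ≥ N,
      ∀ (T : EuclideanSpace ℝ (Fin n) → ℝ) (m : EuclideanSpace ℝ (Fin n)),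
        Measurable T → (∀ x, T x ∈ Set.Icc (0 : ℝ) 1) →
        (∀ (Q : EuclideanSpace ℝ (Fin n) ≃ₗᵢ[ℝ] EuclideanSpace ℝ (Fin n)) (x), T (Q x) = T x) →
        ‖m‖ ≤ δ →
        |∫ x, T x ∂(gaussianEuclidean n m) - ∫ x, T x ∂(gaussianEuclidean n 0)| ≤ ε := by
  intro ε hε
  obtain ⟨N, hN⟩ := exists_nat_gt ((exp (δ ^ 2) - 1) / ε ^ 2)
  refine ⟨N, fun n hn T m hTmeas hT01 hTinv hmδ ↦ ?_⟩
  have hn : (exp (δ ^ 2) - 1) / ε ^ 2 < n := hN.trans_le (Nat.cast_le.2 hn)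
  have hn₀ : 0 < n := Nat.cast_pos.1 <|
    (div_nonneg (sub_nonneg.2 (one_le_exp (sq_nonneg δ))) (sq_nonneg ε)).trans_lt hn
  have : Nonempty (Fin n) := ⟨⟨0, hn₀⟩⟩
  have hb := (EuclideanSpace.basisFun (Fin n) ℝ).orthonormal
  set u : Fin n → EuclideanSpace ℝ (Fin n) := fun i ↦ ‖m‖ • EuclideanSpace.basisFun (Fin n) ℝ i
  have hu : ∀ i, ‖u i‖ = ‖m‖ := fun i ↦ by
    simp only [u, norm_smul, norm_norm, hb.1 i, mul_one]
  have horth : Pairwise fun i j ↦ ⟪u i, u j⟫ = 0 := fun i j hij ↦ by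
    simp only [u, real_inner_smul_left, real_inner_smul_right, hb.2 hij, mul_zero]
  rw [integral_gaussianEuclidean_sub_integral_zero_eq_integral_averageLikelihoodRatio hTinv
    (fun w ↦ .of_mem_Icc 0 1 hTmeas.aemeasurable (.of_forall hT01)) hu]
  refine abs_integral_mul_le_of_integral_sq_le hε (integrable_sq_averageLikelihoodRatio_sub_one u)
    (fun x ↦ abs_le.2 ⟨by linarith [(hT01 x).1], (hT01 x).2⟩) ?_
  rw [integral_sq_averageLikelihoodRatio_sub_one horth hu, Fintype.card_fin]
  calc (exp (‖m‖ ^ 2) - 1) / n ≤ (exp (δ ^ 2) - 1) / n := by gcongr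
    _ ≤ ε ^ 2 := by
        rw [div_lt_iff₀ (by positivity)] at hn
        rw [div_le_iff₀ (by positivity)]
        linarith

/-- In the Gaussian location model `X ~ N(m, I_n)`, for any `δ > 0`, the
supremum over all orthogonally invariant tests `T : ℝ^n → [0,1]` and all `m` with
`‖m‖ ≤ δ` of `|E_m[T] - E_0[T]|` tends to `0` as `n → ∞`. -/
theorem orthogonally_invariant_tests_power_tendsto_level
    (δ : ℝ) (hδ : 0 < δ) :
    ∀ ε > 0, ∃ N : ℕ, ∀ n ≥ N,
      ∀ (T : EuclideanSpace ℝ (Fin n) → ℝ) (m : EuclideanSpace ℝ (Fin n)),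
        Measurable T → (∀ x, T x ∈ Set.Icc (0 : ℝ) 1) →
        (∀ (Q : EuclideanSpace ℝ (Fin n) ≃ₗᵢ[ℝ] EuclideanSpace ℝ (Fin n)) (x), T (Q x) = T x) →
        ‖m‖ ≤ δ →
        |∫ x, T x ∂(gaussianEuclidean n m) - ∫ x, T x ∂(gaussianEuclidean n 0)| ≤ ε :=
  orthogonally_invariant_tests_power_tendsto_level_general δ
end
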